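/- Let Ω ⊆ ℂ^d be open and let 𝒳 be a Hausdorff topological vector space of holomorphic functions on Ω satisfying (P1)–(P3). For w ∈ ℂ^d, the following are equivalent: (1) w ∈ Ω_max; (2) the family ℱ_w = {z_j − w_j : 1 ≤ j ≤ d} is not jointly cyclic; (3) 𝒳 = ℂ1 ⊕ S[ℱ_w] as an algebraic direct sum, i.e., 𝒳 = ℂ1 + S[ℱ_w] and ℂ1 ∩ S[ℱ_w] = {0}. -/

import Mathlib

/-!
A Hausdorff topological vector space `X` of holomorphic functions on an open set
`Ω ⊆ ℂ^d` satisfying (P1) (polynomials are dense), (P2) (point evaluations at points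
of `Ω` are continuous) and (P3) (the shift operators, and hence multiplication by any
polynomial, are continuous linear self maps).
-/
structure HoloFunSpace (d : ℕ) (Ω : Set (Fin d → ℂ)) (X : Type*)
    [AddCommGroup X] [Module ℂ X] [TopologicalSpace X] where
  /-- The realization of elements of `X` as (holomorphic) functions on `Ω`. -/
  toFun : X →ₗ[ℂ] ((Fin d → ℂ) → ℂ)
  holo : ∀ F : X, DifferentiableOn ℂ (toFun F) Ω
  inj : ∀ F G : X, Set.EqOn (toFun F) (toFun G) Ω → F = G
  /-- The polynomials, as elements of `X`. -/
  poly : MvPolynomial (Fin d) ℂ →ₗ[ℂ] X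
  poly_eval : ∀ (P : MvPolynomial (Fin d) ℂ), ∀ z ∈ Ω,
    toFun (poly P) z = MvPolynomial.eval z P
  /-- (P1): polynomials are dense in `X`. -/
  dense_poly : Dense (Set.range fun P : MvPolynomial (Fin d) ℂ => poly P)
  /-- (P2): point evaluations at points of `Ω` are continuous. -/
  eval_cont : ∀ z ∈ Ω, Continuous fun F : X => toFun F z
  /-- Multiplication by a polynomial, a continuous linear self map of `X`;
  (P3) is the special case of the shifts `mul (X j)`. -/
  mul : MvPolynomial (Fin d) ℂ → X →L[ℂ] X
  mul_eval : ∀ (P : MvPolynomial (Fin d) ℂ) (F : X), ∀ z ∈ Ω,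
    toFun (mul P F) z = MvPolynomial.eval z P * toFun F z

namespace HoloFunSpace

variable {d : ℕ} {Ω : Set (Fin d → ℂ)} {X : Type*}
  [AddCommGroup X] [Module ℂ X] [TopologicalSpace X]

/-- The maximal domain `Ω_max`: all `w ∈ ℂ^d` such that evaluation at `w`, defined on
polynomials, extends to a continuous linear functional on `X`. -/
def maxDomain (H : HoloFunSpace d Ω X) : Set (Fin d → ℂ) :=
  {w | ∃ Λ : X →L[ℂ] ℂ, ∀ P : MvPolynomial (Fin d) ℂ, Λ (H.poly P) = MvPolynomial.eval w P}

/-- The invariant subspace `S[F]`: the closure of `{P · F : P ∈ 𝒫_d}`. -/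
def invSub (H : HoloFunSpace d Ω X) (F : X) : Set X :=
  closure (Set.range fun P : MvPolynomial (Fin d) ℂ => H.mul P F)

/-- `F` is cyclic if `S[F] = X`. -/
def Cyclic (H : HoloFunSpace d Ω X) (F : X) : Prop := H.invSub F = Set.univ

/-- The joint invariant subspace `S[𝓕]`: the closed linear span of `⋃_{F ∈ 𝓕} S[F]`. -/
def jointInvSub (H : HoloFunSpace d Ω X) (𝓕 : Set X) : Set X :=
  closure (Submodule.span ℂ (⋃ F ∈ 𝓕, H.invSub F) : Set X)

/-- A family `𝓕` is jointly cyclic if `S[𝓕] = X`. -/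
def JointlyCyclic (H : HoloFunSpace d Ω X) (𝓕 : Set X) : Prop :=
  H.jointInvSub 𝓕 = Set.univ

end HoloFunSpace

/-! Modulo the ideal generated by the `z_j - w_j`, every polynomial `P` is congruent to the
constant `P(w)`, so `P - P(w)·1 ∈ S[ℱ_w]` and, the polynomials being dense, `S[ℱ_w] + ℂ·1` is
dense. Hence `ℱ_w` is jointly cyclic iff `1 ∈ S[ℱ_w]`. If `1 ∉ S[ℱ_w]`, then `S[ℱ_w] + ℂ·1`, a
closed subspace plus a line, is closed and dense, hence everything, so `S[ℱ_w]` is the kernel of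
a linear functional; that functional is continuous because its kernel is closed, and it sends `P`
to `P(w)`. Conversely a continuous extension `Λ` of evaluation at `w` forces `S[ℱ_w] = ker Λ`,
which is complementary to `ℂ·1`. -/

open MvPolynomial in
theorem MvPolynomial.sub_C_eval_mem_span_X_sub_C {σ R : Type*} [CommRing R] (w : σ → R)
    (Q : MvPolynomial σ R) :
    Q - C (eval w Q) ∈ Ideal.span (Set.range fun i => X i - C (w i)) := by
  induction Q using MvPolynomial.induction_on with
  | C a => simp
  | add p q hp hq =>
    have : p + q - C (eval w (p + q)) = (p - C (eval w p)) + (q - C (eval w q)) := by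
      rw [map_add, map_add]; ring
    rw [this]
    exact Ideal.add_mem _ hp hq
  | mul_X p i hp =>
    have : p * X i - C (eval w (p * X i)) = p * (X i - C (w i)) + C (w i) * (p - C (eval w p)) := by
      rw [eval_mul, eval_X, map_mul]; ring
    rw [this]
    exact Ideal.add_mem _ (Ideal.mul_mem_left _ _ (Ideal.subset_span ⟨i, rfl⟩))
      (Ideal.mul_mem_left _ _ hp)

theorem LinearMap.exists_eq_smul_add_mem_ker_of_apply_eq_one {R E : Type*} [Ring R]
    [AddCommGroup E] [Module R E] {f : E →ₗ[R] R} {e : E} (he : f e = 1) (x : E) :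
    ∃ c : R, ∃ y ∈ LinearMap.ker f, x = c • e + y :=
  ⟨f x, x - f x • e, by simp [he], (add_sub_cancel _ _).symm⟩

theorem LinearMap.setOf_eq_smul_inter_ker_of_apply_eq_one {R E : Type*} [Ring R]
    [AddCommGroup E] [Module R E] {f : E →ₗ[R] R} {e : E} (he : f e = 1) :
    {x | ∃ c : R, x = c • e} ∩ LinearMap.ker f = {0} := by
  refine Set.eq_singleton_iff_unique_mem.mpr ⟨⟨⟨0, (zero_smul _ _).symm⟩, zero_mem _⟩, ?_⟩
  rintro _ ⟨⟨c, rfl⟩, hc⟩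
  simp_all

theorem Submodule.exists_continuousLinearMap_eq_one_of_dense_sup_span
    {𝕜 E : Type*} [NontriviallyNormedField 𝕜] [CompleteSpace 𝕜]
    [AddCommGroup E] [Module 𝕜 E] [TopologicalSpace E] [IsTopologicalAddGroup E]
    [ContinuousSMul 𝕜 E] {M : Submodule 𝕜 E} (hM : IsClosed (M : Set E)) {e : E} (he : e ∉ M)
    (hdense : Dense ((M ⊔ 𝕜 ∙ e : Submodule 𝕜 E) : Set E)) :
    ∃ Λ : E →L[𝕜] 𝕜, Λ e = 1 ∧ ∀ x ∈ M, Λ x = 0 := by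
  have htop : M ⊔ 𝕜 ∙ e = ⊤ := by
    rw [← Submodule.coe_eq_univ, ← (M.isClosed_sup_finiteDimensional _ hM).closure_eq]
    exact hdense.closure_eq
  obtain ⟨f, hfe, hfM⟩ := M.exists_dual_map_eq_bot_of_notMem he inferInstance
  have hMf : M ≤ LinearMap.ker f := LinearMap.le_ker_iff_map.mpr hfM
  have hker : LinearMap.ker f = M := by
    refine le_antisymm (fun x hx => ?_) hMf
    obtain ⟨y, hy, z, hz, rfl⟩ := Submodule.mem_sup.mp (htop ▸ Submodule.mem_top : x ∈ M ⊔ 𝕜 ∙ e)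
    obtain ⟨c, rfl⟩ := Submodule.mem_span_singleton.mp hz
    have hc : c = 0 := by
      simpa [LinearMap.mem_ker.mp (hMf hy), hfe] using hx
    simpa [hc] using hy
  have hf : Continuous f := f.continuous_of_isClosed_ker (hker ▸ hM)
  refine ⟨(f e)⁻¹ • ⟨f, hf⟩, inv_mul_cancel₀ hfe, fun x hx => ?_⟩
  simp [LinearMap.mem_ker.mp (hMf hx)]

namespace HoloFunSpace

open MvPolynomial

variable {d : ℕ} {Ω : Set (Fin d → ℂ)} {E : Type*}
  [AddCommGroup E] [Module ℂ E] [TopologicalSpace E] (H : HoloFunSpace d Ω E)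

theorem mul_poly (P Q : MvPolynomial (Fin d) ℂ) : H.mul P (H.poly Q) = H.poly (P * Q) :=
  H.inj _ _ fun z hz => by rw [H.mul_eval P _ z hz, H.poly_eval Q z hz, H.poly_eval _ z hz, map_mul]

theorem poly_C (c : ℂ) : H.poly (C c) = c • H.poly 1 := by
  rw [← map_smul, smul_eq_C_mul, mul_one]

theorem poly_one_ne_zero (hΩ : Ω.Nonempty) : H.poly 1 ≠ 0 := by
  obtain ⟨z, hz⟩ := hΩ
  intro h
  simpa [h] using H.poly_eval 1 z hz

theorem eq_univ_of_isClosed_of_poly_mem {S : Set E} (hS : IsClosed S)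
    (h : ∀ P, H.poly P ∈ S) : S = Set.univ :=
  Set.eq_univ_of_univ_subset <|
    H.dense_poly.closure_eq ▸ closure_minimal (Set.range_subset_iff.mpr h) hS

theorem jointInvSub_subset {𝓕 : Set E} {N : Submodule ℂ E} (hN : IsClosed (N : Set E))
    (h : ∀ F ∈ 𝓕, ∀ P, H.mul P F ∈ N) : H.jointInvSub 𝓕 ⊆ N :=
  closure_minimal (Submodule.span_le.mpr <| Set.iUnion₂_subset fun F hF =>
    closure_minimal (Set.range_subset_iff.mpr (h F hF)) hN) hN

theorem isClosed_jointInvSub (𝓕 : Set E) : IsClosed (H.jointInvSub 𝓕) :=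
  isClosed_closure

theorem mul_mem_jointInvSub {𝓕 : Set E} {F : E} (hF : F ∈ 𝓕) (P : MvPolynomial (Fin d) ℂ) :
    H.mul P F ∈ H.jointInvSub 𝓕 :=
  subset_closure <| Submodule.subset_span <| Set.mem_biUnion hF <| subset_closure ⟨P, rfl⟩

section TopologicalVectorSpace

variable [IsTopologicalAddGroup E] [ContinuousSMul ℂ E]

def jointInvSubmodule (𝓕 : Set E) : Submodule ℂ E :=
  (Submodule.span ℂ (⋃ F ∈ 𝓕, H.invSub F)).topologicalClosure

theorem coe_jointInvSubmodule (𝓕 : Set E) :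
    (H.jointInvSubmodule 𝓕 : Set E) = H.jointInvSub 𝓕 :=
  rfl

/-- The family `ℱ_w = {z_j - w_j}`. -/
def centeredCoords (w : Fin d → ℂ) : Set E :=
  Set.range fun j => H.poly (X j - C (w j))

theorem poly_sub_eval_smul_one_mem_jointInvSub (w : Fin d → ℂ) (P : MvPolynomial (Fin d) ℂ) :
    H.poly P - eval w P • H.poly 1 ∈ H.jointInvSub (H.centeredCoords w) := by
  obtain ⟨c, hc⟩ := Ideal.mem_span_range_iff_exists_fun.mp (sub_C_eval_mem_span_X_sub_C w P)
  rw [← poly_C, ← map_sub, ← hc, map_sum, ← coe_jointInvSubmodule]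
  refine Submodule.sum_mem _ fun j _ => ?_
  rw [← mul_poly]
  exact H.mul_mem_jointInvSub (Set.mem_range_self j) (c j)

theorem jointInvSub_centeredCoords_eq_ker {w : Fin d → ℂ} {Λ : E →L[ℂ] ℂ}
    (hΛ : ∀ P, Λ (H.poly P) = eval w P) :
    H.jointInvSub (H.centeredCoords w) = (Λ.ker : Set E) := by
  refine (H.jointInvSub_subset Λ.isClosed_ker ?_).antisymm fun F hF => ?_
  · intro F hF P
    obtain ⟨j, rfl⟩ := hF
    simp [mul_poly, hΛ]
  · have hclosed : IsClosed {F : E | F - Λ F • H.poly 1 ∈ H.jointInvSub (H.centeredCoords w)} :=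
      (H.isClosed_jointInvSub _).preimage (continuous_id.sub (Λ.continuous.smul continuous_const))
    have hall := H.eq_univ_of_isClosed_of_poly_mem hclosed fun P => by
      simpa [hΛ] using H.poly_sub_eval_smul_one_mem_jointInvSub w P
    simpa [show Λ F = 0 from hF] using Set.eq_univ_iff_forall.mp hall F

theorem jointlyCyclic_centeredCoords_iff (w : Fin d → ℂ) :
    H.JointlyCyclic (H.centeredCoords w) ↔ H.poly 1 ∈ H.jointInvSub (H.centeredCoords w) := by
  refine ⟨fun h => h.symm ▸ Set.mem_univ _, fun h => ?_⟩
  refine H.eq_univ_of_isClosed_of_poly_mem (H.isClosed_jointInvSub _) fun P => ?_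
  rw [← coe_jointInvSubmodule] at h ⊢
  simpa using Submodule.add_mem _ (H.poly_sub_eval_smul_one_mem_jointInvSub w P)
    (Submodule.smul_mem _ (eval w P) h)

theorem mem_maxDomain_iff_poly_one_notMem (w : Fin d → ℂ) :
    w ∈ H.maxDomain ↔ H.poly 1 ∉ H.jointInvSub (H.centeredCoords w) := by
  constructor
  · rintro ⟨Λ, hΛ⟩
    simp [H.jointInvSub_centeredCoords_eq_ker hΛ, hΛ]
  · intro h1
    rw [← coe_jointInvSubmodule] at h1
    have hdense : Dense ((H.jointInvSubmodule (H.centeredCoords w) ⊔ ℂ ∙ H.poly 1 :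
        Submodule ℂ E) : Set E) := by
      refine H.dense_poly.mono (Set.range_subset_iff.mpr fun P => Submodule.mem_sup.mpr ?_)
      exact ⟨_, H.poly_sub_eval_smul_one_mem_jointInvSub w P, _,
        Submodule.smul_mem _ _ (Submodule.mem_span_singleton_self _), sub_add_cancel _ _⟩
    obtain ⟨Λ, hΛ1, hΛM⟩ := Submodule.exists_continuousLinearMap_eq_one_of_dense_sup_span
      (H.isClosed_jointInvSub _) h1 hdense
    refine ⟨Λ, fun P => ?_⟩
    have := hΛM _ (H.poly_sub_eval_smul_one_mem_jointInvSub w P)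
    rwa [map_sub, map_smul, hΛ1, smul_eq_mul, mul_one, sub_eq_zero] at this

end TopologicalVectorSpace

end HoloFunSpace

open HoloFunSpace in
theorem mem_maxDomain_tfae_general
    {d : ℕ} {Ω : Set (Fin d → ℂ)} {X : Type*}
    [AddCommGroup X] [Module ℂ X] [TopologicalSpace X]
    [IsTopologicalAddGroup X] [ContinuousSMul ℂ X]
    (hΩne : Ω.Nonempty) (H : HoloFunSpace d Ω X) (w : Fin d → ℂ) :
    (w ∈ H.maxDomain ↔
      ¬ H.JointlyCyclic
        (Set.range fun j : Fin d => H.poly (MvPolynomial.X j - MvPolynomial.C (w j)))) ∧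
    (w ∈ H.maxDomain ↔
      ((∀ F : X, ∃ c : ℂ, ∃ G ∈ H.jointInvSub
          (Set.range fun j : Fin d => H.poly (MvPolynomial.X j - MvPolynomial.C (w j))),
        F = c • H.poly 1 + G) ∧
      {F : X | ∃ c : ℂ, F = c • H.poly 1} ∩ H.jointInvSub
          (Set.range fun j : Fin d => H.poly (MvPolynomial.X j - MvPolynomial.C (w j)))
        = {0})) := by
  have hmax := H.mem_maxDomain_iff_poly_one_notMem w
  refine ⟨hmax.trans (H.jointlyCyclic_centeredCoords_iff w).not.symm, ⟨fun hw => ?_, ?_⟩⟩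
  · obtain ⟨Λ, hΛ⟩ := hw
    have hΛ1 : Λ (H.poly 1) = 1 := by simp [hΛ]
    rw [← centeredCoords, H.jointInvSub_centeredCoords_eq_ker hΛ]
    exact ⟨LinearMap.exists_eq_smul_add_mem_ker_of_apply_eq_one hΛ1,
      LinearMap.setOf_eq_smul_inter_ker_of_apply_eq_one hΛ1⟩
  · rintro ⟨-, hinter⟩
    refine hmax.mpr fun h1 => H.poly_one_ne_zero hΩne ?_
    exact hinter.subset ⟨⟨1, (one_smul ℂ _).symm⟩, h1⟩

open HoloFunSpace in
/-- For `w ∈ ℂ^d` the following are equivalent: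
(1) `w ∈ Ω_max`; (2) the family `ℱ_w = {z_j - w_j : 1 ≤ j ≤ d}` is not jointly
cyclic; (3) `X = ℂ·1 ⊕ S[ℱ_w]` as an algebraic direct sum, i.e. `X = ℂ·1 + S[ℱ_w]`
and `ℂ·1 ∩ S[ℱ_w] = {0}`.  (The hypothesis `Ω ≠ ∅` is implicit in the paper's
standing assumption that `X` consists of holomorphic functions on a domain, so that
the constant function `1` is a nonzero element of `X`.) -/
theorem mem_maxDomain_tfae
    {d : ℕ} {Ω : Set (Fin d → ℂ)} {X : Type*}
    [AddCommGroup X] [Module ℂ X] [TopologicalSpace X]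
    [IsTopologicalAddGroup X] [ContinuousSMul ℂ X] [T2Space X]
    (hΩ : IsOpen Ω) (hΩne : Ω.Nonempty) (H : HoloFunSpace d Ω X) (w : Fin d → ℂ) :
    (w ∈ H.maxDomain ↔
      ¬ H.JointlyCyclic
        (Set.range fun j : Fin d => H.poly (MvPolynomial.X j - MvPolynomial.C (w j)))) ∧
    (w ∈ H.maxDomain ↔
      ((∀ F : X, ∃ c : ℂ, ∃ G ∈ H.jointInvSub
          (Set.range fun j : Fin d => H.poly (MvPolynomial.X j - MvPolynomial.C (w j))),
        F = c • H.poly 1 + G) ∧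
      {F : X | ∃ c : ℂ, F = c • H.poly 1} ∩ H.jointInvSub
          (Set.range fun j : Fin d => H.poly (MvPolynomial.X j - MvPolynomial.C (w j)))
        = {0})) :=
  mem_maxDomain_tfae_general hΩne H w
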